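/- Let D be a semi-complete digraph on n vertices, and let π and σ be vertex orderings of D with ctw(D, σ) ≤ ctw(D, π) = c. Suppose m ∈ [3c, n − 3c] is such that in D there exists a family of |E^m_π| pairwise arc-disjoint directed paths leading from the set of the last n − (m + 3c) vertices of π to the set of the first m − 3c vertices of π. Then there exists a vertex ordering σ* of D such that: (1) the set of the first m vertices of σ* equals the set of the first m vertices of π; (2) for every position j with j ≤ m − 3c or j > m + 3c, the vertex at position j in σ* equals the vertex at position j in σ; and (3) ctw(D, σ*) ≤ ctw(D, σ). -/

import Mathlib

/-!
In a semicomplete digraph, two orderings `α`, `β` of width at most `c` never invert two vertices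
`u`, `w` with `α u + 3c < α w`: each vertex `x` with `α u ≤ α x < α w` is joined to `u` or `w` by
an arc lying in one of the cuts of `α` at `α u + 1` and `α w` or of `β` at `β u`, and distinct
vertices give distinct arcs. Consequently positions in `π` and `σ` differ by at most `3c`.

Let `S` be the first `m` vertices of `π`. By the arc-disjoint paths, the arcs entering `S` form a
minimum cut separating the last `n - (m + 3c)` vertices of `π` from the first `m - 3c`. The
ordering `σ*` moves `S` to the front of `σ`, keeping the `σ`-order inside and outside `S`; it
agrees with `σ` outside the window because `S` lies between the `σ`-prefixes of lengths `m - 3c`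
and `m + 3c`. Every prefix of `σ*` is `Y ∩ S` or `Y ∪ S` for a prefix `Y` of `σ`. As `σ` puts
`S` before the far suffix of `π` and the far prefix before everything outside `S`, the other one of
`Y ∪ S`, `Y ∩ S` still separates, so it has at least as many entering arcs as `S`; submodularity of
the number of entering arcs then bounds the cut of the prefix by that of `Y`.
-/

open Finset

variable {V : Type*} [Fintype V] [DecidableEq V]

/-- The set of the first `i` vertices in the vertex ordering `π`. -/
def prefixSet (π : V ≃ Fin (Fintype.card V)) (i : ℕ) : Finset V :=
  Finset.univ.filter (fun v => (π v : ℕ) < i)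

/-- The set of the last `n - i` vertices in the vertex ordering `π`. -/
def suffixSet (π : V ≃ Fin (Fintype.card V)) (i : ℕ) : Finset V :=
  Finset.univ.filter (fun v => i ≤ (π v : ℕ))

/-- The cut at position `i`: the arcs from outside the length-`i` prefix into the prefix. -/
def cutFinset (E : V → V → Prop) [DecidableRel E]
    (π : V ≃ Fin (Fintype.card V)) (i : ℕ) : Finset (V × V) :=
  Finset.univ.filter (fun p : V × V => E p.1 p.2 ∧ i ≤ (π p.1 : ℕ) ∧ (π p.2 : ℕ) < i)

/-- The size of the cut at position `i`. -/
def cutSize (E : V → V → Prop) [DecidableRel E]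
    (π : V ≃ Fin (Fintype.card V)) (i : ℕ) : ℕ :=
  (cutFinset E π i).card

/-- The width of a vertex ordering. -/
def widthOf (E : V → V → Prop) [DecidableRel E] (π : V ≃ Fin (Fintype.card V)) : ℕ :=
  (Finset.range (Fintype.card V + 1)).sup (cutSize E π)

/-- The cutwidth of a digraph. -/
noncomputable def cutwidth (E : V → V → Prop) [DecidableRel E] : ℕ :=
  sInf {w | ∃ π : V ≃ Fin (Fintype.card V), widthOf E π = w}

/-- The OLA-cost of a vertex ordering. -/
def olaOf (E : V → V → Prop) [DecidableRel E] (π : V ≃ Fin (Fintype.card V)) : ℕ :=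
  ∑ i ∈ Finset.range (Fintype.card V + 1), cutSize E π i

/-- The OLA-cost of a digraph. -/
noncomputable def ola (E : V → V → Prop) [DecidableRel E] : ℕ :=
  sInf {w | ∃ π : V ≃ Fin (Fintype.card V), olaOf E π = w}

/-- The arcs of a path given as a list of vertices. -/
def pathArcs (l : List V) : List (V × V) := l.zip l.tail

/-- `l` is a directed path (walk) from `u` to `v` in the digraph `E`. -/
def IsPath (E : V → V → Prop) (u v : V) (l : List V) : Prop :=
  l.head? = some u ∧ l.getLast? = some v ∧ List.Chain' E l

section Ordering

omit [DecidableEq V]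

theorem mem_prefixSet {τ : V ≃ Fin (Fintype.card V)} {i : ℕ} {v : V} :
    v ∈ prefixSet τ i ↔ (τ v : ℕ) < i := by
  simp [prefixSet]

theorem mem_suffixSet {τ : V ≃ Fin (Fintype.card V)} {i : ℕ} {v : V} :
    v ∈ suffixSet τ i ↔ i ≤ (τ v : ℕ) := by
  simp [suffixSet]

theorem card_prefixSet (τ : V ≃ Fin (Fintype.card V)) (i : ℕ) :
    #(prefixSet τ i) = min (Fintype.card V) i := by
  rw [← Fin.card_filter_val_lt]
  exact card_equiv τ fun v => by simp [prefixSet]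

theorem prefixSet_mono (τ : V ≃ Fin (Fintype.card V)) {i j : ℕ} (h : i ≤ j) :
    prefixSet τ i ⊆ prefixSet τ j := fun v hv => by
  rw [mem_prefixSet] at hv ⊢; omega

theorem prefixSet_card_eq_of_forall_lt {τ : V ≃ Fin (Fintype.card V)} {X : Finset V}
    (hX : ∀ x ∈ X, ∀ y ∉ X, τ x < τ y) : prefixSet τ #X = X := by
  symm
  refine eq_of_subset_of_card_le (fun x hx => ?_) ?_
  · have hbefore : prefixSet τ (τ x) ⊂ X := by
      refine (ssubset_iff_of_subset fun u hu => ?_).mpr ⟨x, hx, by simp [mem_prefixSet]⟩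
      by_contra huX
      exact absurd (hX x hx u huX) (not_lt.mpr (Fin.le_of_lt (mem_prefixSet.mp hu)))
    have := card_lt_card hbefore
    rw [card_prefixSet, min_eq_right (τ x).isLt.le] at this
    exact mem_prefixSet.mpr this
  · rw [card_prefixSet]; exact min_le_right _ _

theorem apply_eq_of_forall_lt_iff {τ₁ τ₂ : V ≃ Fin (Fintype.card V)} {v : V}
    (h : ∀ u, τ₁ u < τ₁ v ↔ τ₂ u < τ₂ v) : τ₁ v = τ₂ v := by
  have hpre : prefixSet τ₁ (τ₁ v) = prefixSet τ₂ (τ₂ v) := by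
    ext u; simpa only [mem_prefixSet, Fin.val_fin_lt] using h u
  have := congrArg card hpre
  rw [card_prefixSet, card_prefixSet, min_eq_right (τ₁ v).isLt.le,
    min_eq_right (τ₂ v).isLt.le] at this
  exact Fin.ext this

theorem mem_cutFinset {E : V → V → Prop} [DecidableRel E] {τ : V ≃ Fin (Fintype.card V)}
    {i : ℕ} {e : V × V} : e ∈ cutFinset E τ i ↔ E e.1 e.2 ∧ i ≤ (τ e.1 : ℕ) ∧ (τ e.2 : ℕ) < i := by
  simp [cutFinset]

theorem cutSize_le_widthOf (E : V → V → Prop) [DecidableRel E] (τ : V ≃ Fin (Fintype.card V))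
    {i : ℕ} (hi : i ≤ Fintype.card V) : cutSize E τ i ≤ widthOf E τ :=
  le_sup (mem_range.mpr (Nat.lt_succ_of_le hi))

end Ordering

section Cuts

variable (E : V → V → Prop) [DecidableRel E]

def inArcs (S : Finset V) : Finset (V × V) :=
  univ.filter fun e => E e.1 e.2 ∧ e.1 ∉ S ∧ e.2 ∈ S

theorem cutSize_eq_card_inArcs (τ : V ≃ Fin (Fintype.card V)) (i : ℕ) :
    cutSize E τ i = #(inArcs E (prefixSet τ i)) := by
  rw [cutSize]
  congr 1
  ext e
  simp [cutFinset, inArcs, prefixSet]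

theorem card_inArcs_inter_add_card_inArcs_union_le (S T : Finset V) :
    #(inArcs E (S ∩ T)) + #(inArcs E (S ∪ T)) ≤ #(inArcs E S) + #(inArcs E T) := by
  simp only [inArcs, card_filter, ← sum_add_distrib]
  refine sum_le_sum fun e _ => ?_
  by_cases e.1 ∈ S <;> by_cases e.1 ∈ T <;> by_cases e.2 ∈ S <;> by_cases e.2 ∈ T <;>
    by_cases E e.1 e.2 <;> simp [*]

end Cuts

section Semicomplete

variable {E : V → V → Prop} [DecidableRel E] (hsc : ∀ u v : V, u ≠ v → E u v ∨ E v u)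
  {α β : V ≃ Fin (Fintype.card V)} {c : ℕ} (hα : widthOf E α ≤ c) (hβ : widthOf E β ≤ c)
include hsc hα hβ

theorem lt_of_widthOf_le_of_add_lt {u w : V} (huw : (α u : ℕ) + 3 * c < α w) : β u < β w := by
  by_contra! hwu
  have hne : u ≠ w := by rintro rfl; omega
  replace hwu : β w < β u := lt_of_le_of_ne hwu fun h => hne (β.injective h).symm
  set T := (cutFinset E α (α u + 1) ∪ cutFinset E α (α w)) ∪ cutFinset E β (β u)
  have hT : #T ≤ 3 * c := by
    have h₁ := cutSize_le_widthOf E α (i := α u + 1) (by have := (α w).isLt; omega)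
    have h₂ := cutSize_le_widthOf E α (α w).isLt.le
    have h₃ := cutSize_le_widthOf E β (β u).isLt.le
    have h₄ : #T ≤ _ + _ := card_union_le _ _
    have h₅ := card_union_le (cutFinset E α (α u + 1)) (cutFinset E α (α w))
    simp only [cutSize] at h₁ h₂ h₃
    omega
  -- recovers `x` from the arc of `T` chosen for it below
  let endpoint : V × V → V := fun e =>
    if e.1 = w then e.2 else if e.2 = w ∨ e.2 = u then e.1 else e.2
  have hcover : prefixSet α (α w) \ prefixSet α (α u) ⊆ T.image endpoint := by
    intro x hx
    simp only [mem_sdiff, mem_prefixSet, not_lt] at hx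
    have hxw : x ≠ w := by rintro rfl; omega
    simp only [T, mem_image, mem_union, mem_cutFinset]
    by_cases hwx : E w x
    · exact ⟨(w, x), by simp [hwx, hx.1], by simp [endpoint]⟩
    by_cases hux : β u ≤ β x
    · have hxw' : E x w := (hsc x w hxw).resolve_right hwx
      exact ⟨(x, w), by simp [hxw', hux, hwu], by simp [endpoint, hxw]⟩
    have hxu : x ≠ u := by rintro rfl; exact hux le_rfl
    by_cases hxu' : E x u
    · refine ⟨(x, u), Or.inl (Or.inl ⟨hxu', ?_, by simp⟩), by simp [endpoint, hxw]⟩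
      have : (α x : ℕ) ≠ α u := fun h => hxu (α.injective (Fin.ext h))
      simp only; omega
    · have hux' : E u x := (hsc u x hxu.symm).resolve_right hxu'
      refine ⟨(u, x), Or.inr ⟨hux', le_rfl, not_le.mp hux⟩, ?_⟩
      simp [endpoint, hxw, hxu, hne]
  have := (card_le_card hcover).trans card_image_le
  rw [card_sdiff_of_subset (prefixSet_mono α (by omega)), card_prefixSet, card_prefixSet] at this
  have := (α w).isLt
  omega

theorem le_add_of_widthOf_le (v : V) : (β v : ℕ) ≤ α v + 3 * c := by
  have hsub : prefixSet β (β v - 3 * c) ⊆ prefixSet α (α v) := fun x hx => by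
    rw [mem_prefixSet] at hx ⊢
    exact lt_of_widthOf_le_of_add_lt hsc hβ hα (by omega)
  have := card_le_card hsub
  rw [card_prefixSet, card_prefixSet] at this
  have := (β v).isLt
  omega

theorem prefixSet_subset_prefixSet_add (i : ℕ) : prefixSet α i ⊆ prefixSet β (i + 3 * c) :=
  fun v hv => by
    rw [mem_prefixSet] at hv ⊢
    have := le_add_of_widthOf_le hsc hα hβ v
    omega

end Semicomplete

section Paths

variable {E : V → V → Prop} [DecidableRel E]

theorem IsPath.exists_mem_pathArcs_inArcs {s t : V} {l : List V} (hl : IsPath E s t l)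
    {S : Finset V} (hs : s ∉ S) (ht : t ∈ S) : ∃ e ∈ pathArcs l, e ∈ inArcs E S := by
  induction l generalizing s with
  | nil => simp [IsPath] at hl
  | cons a l ih =>
    obtain ⟨hhead, hlast, hchain⟩ := hl
    obtain rfl : a = s := by simpa using hhead
    cases l with
    | nil =>
      simp only [List.getLast?_singleton, Option.some.injEq] at hlast
      exact absurd (hlast ▸ ht) hs
    | cons b l =>
      obtain ⟨hab, hchain⟩ := List.isChain_cons_cons.mp hchain
      have harcs : pathArcs (a :: b :: l) = (a, b) :: pathArcs (b :: l) := rfl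
      by_cases hb : b ∈ S
      · exact ⟨(a, b), by simp [harcs], by simp [inArcs, hab, hs, hb]⟩
      · obtain ⟨e, he, heS⟩ := ih ⟨rfl, by simpa using hlast, hchain⟩ hb
        exact ⟨e, by simp [harcs, he], heS⟩

theorem card_le_card_inArcs_of_arcDisjoint {ι : Type*} [Fintype ι] {A B T : Finset V}
    (P : ι → List V) (hP : ∀ i, ∃ s ∈ B, ∃ t ∈ A, IsPath E s t (P i))
    (hdisj : ∀ i j, i ≠ j → ∀ e : V × V, e ∈ pathArcs (P i) → e ∉ pathArcs (P j))
    (hA : A ⊆ T) (hB : Disjoint B T) : Fintype.card ι ≤ #(inArcs E T) := by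
  have hcross (i : ι) : ∃ e ∈ pathArcs (P i), e ∈ inArcs E T := by
    obtain ⟨s, hs, t, ht, hst⟩ := hP i
    exact hst.exists_mem_pathArcs_inArcs (disjoint_left.mp hB hs) (hA ht)
  choose f hfP hfT using hcross
  rw [← card_univ]
  refine card_le_card_of_injOn f (fun i _ => hfT i) fun i _ j _ hij => ?_
  by_contra hne
  exact hdisj i j hne _ (hfP i) (hij ▸ hfP j)

end Paths

section FrontLoad

variable (σ : V ≃ Fin (Fintype.card V)) (S : Finset V)

def frontLoadKey (v : V) : ℕ := (if v ∈ S then 0 else Fintype.card V) + σ v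

theorem frontLoadKey_injective : Function.Injective (frontLoadKey σ S) := by
  intro x y hxy
  have := (σ x).isLt
  have := (σ y).isLt
  have hσ : (σ x : ℕ) = σ y := by
    unfold frontLoadKey at hxy
    split_ifs at hxy <;> omega
  exact σ.injective (Fin.ext hσ)

def frontLoad : V ≃ Fin (Fintype.card V) :=
  letI : LinearOrder V := LinearOrder.lift' _ (frontLoadKey_injective σ S)
  (monoEquivOfFin V rfl).symm.toEquiv

variable {σ S}

theorem frontLoad_lt_frontLoad_iff {x y : V} :
    frontLoad σ S x < frontLoad σ S y ↔ frontLoadKey σ S x < frontLoadKey σ S y :=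
  letI : LinearOrder V := LinearOrder.lift' _ (frontLoadKey_injective σ S)
  (monoEquivOfFin V rfl).symm.lt_iff_lt

theorem frontLoad_lt_frontLoad_of_mem_of_notMem {x y : V} (hx : x ∈ S) (hy : y ∉ S) :
    frontLoad σ S x < frontLoad σ S y := by
  rw [frontLoad_lt_frontLoad_iff]
  simp only [frontLoadKey, hx, hy, if_true, if_false]
  have := (σ x).isLt
  omega

theorem frontLoad_lt_frontLoad_iff_of_mem_iff {x y : V} (h : x ∈ S ↔ y ∈ S) :
    frontLoad σ S x < frontLoad σ S y ↔ σ x < σ y := by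
  rw [frontLoad_lt_frontLoad_iff, Fin.lt_def]
  by_cases hy : y ∈ S <;> simp [frontLoadKey, h, hy]

theorem prefixSet_frontLoad_card : prefixSet (frontLoad σ S) #S = S :=
  prefixSet_card_eq_of_forall_lt fun _ hx _ hy => frontLoad_lt_frontLoad_of_mem_of_notMem hx hy

theorem frontLoad_apply_of_prefixSet_subset {k : ℕ} (hk : prefixSet σ k ⊆ S) {v : V}
    (hv : (σ v : ℕ) < k) : frontLoad σ S v = σ v := by
  have hvS : v ∈ S := hk (mem_prefixSet.mpr hv)
  refine apply_eq_of_forall_lt_iff fun u => ?_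
  by_cases huS : u ∈ S
  · exact frontLoad_lt_frontLoad_iff_of_mem_iff (iff_of_true huS hvS)
  · have hku : k ≤ σ u := not_lt.mp fun h => huS (hk (mem_prefixSet.mpr h))
    refine iff_of_false (lt_asymm (frontLoad_lt_frontLoad_of_mem_of_notMem hvS huS)) ?_
    rw [Fin.lt_def]; omega

theorem frontLoad_apply_of_subset_prefixSet {l : ℕ} (hl : S ⊆ prefixSet σ l) {v : V}
    (hv : l ≤ (σ v : ℕ)) : frontLoad σ S v = σ v := by
  have hvS : v ∉ S := fun h => absurd (mem_prefixSet.mp (hl h)) (not_lt.mpr hv)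
  refine apply_eq_of_forall_lt_iff fun u => ?_
  by_cases huS : u ∈ S
  · have hul : (σ u : ℕ) < l := mem_prefixSet.mp (hl huS)
    refine iff_of_true (frontLoad_lt_frontLoad_of_mem_of_notMem huS hvS) ?_
    rw [Fin.lt_def]; omega
  · exact frontLoad_lt_frontLoad_iff_of_mem_iff (iff_of_false huS hvS)

theorem exists_prefixSet_frontLoad_eq_inter {i : ℕ} (hi : i ≤ #S) :
    ∃ j ≤ Fintype.card V, prefixSet (frontLoad σ S) i = prefixSet σ j ∩ S ∧
      ∀ u ∈ prefixSet σ j, ∃ x ∈ S, σ u ≤ σ x := by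
  set X := prefixSet (frontLoad σ S) i
  have hXS : X ⊆ S := (prefixSet_mono _ hi).trans prefixSet_frontLoad_card.subset
  set Y := univ.filter fun u => ∃ x ∈ X, σ u ≤ σ x
  have hY : prefixSet σ #Y = Y := prefixSet_card_eq_of_forall_lt fun u hu y hy => by
    simp only [Y, mem_filter, mem_univ, true_and, not_exists, not_and, not_le] at hu hy
    obtain ⟨x, hx, hux⟩ := hu
    exact hux.trans_lt (hy x hx)
  refine ⟨#Y, card_le_univ Y, ?_, ?_⟩ <;> rw [hY]
  · ext u
    simp only [Y, mem_inter, mem_filter, mem_univ, true_and]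
    refine ⟨fun hu => ⟨⟨u, hu, le_rfl⟩, hXS hu⟩, fun ⟨⟨x, hx, hux⟩, huS⟩ => ?_⟩
    have := (frontLoad_lt_frontLoad_iff_of_mem_iff (iff_of_true (hXS hx) huS)).not.mpr hux.not_gt
    exact mem_prefixSet.mpr ((Fin.le_def.mp (not_lt.mp this)).trans_lt (mem_prefixSet.mp hx))
  · intro u hu
    obtain ⟨x, hx, hux⟩ := (mem_filter.mp hu).2
    exact ⟨x, hXS hx, hux⟩

theorem exists_prefixSet_frontLoad_eq_union {i : ℕ} (hi : #S ≤ i) :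
    ∃ j ≤ Fintype.card V, prefixSet (frontLoad σ S) i = prefixSet σ j ∪ S ∧
      ∀ u ∉ prefixSet σ j, ∃ y ∉ S, σ y ≤ σ u := by
  set X := prefixSet (frontLoad σ S) i
  have hSX : S ⊆ X := prefixSet_frontLoad_card.symm.subset.trans (prefixSet_mono _ hi)
  set Y := univ.filter fun u => ∀ y ∉ X, σ u < σ y
  have hY : prefixSet σ #Y = Y := prefixSet_card_eq_of_forall_lt fun u hu y hy => by
    simp only [Y, mem_filter, mem_univ, true_and, not_forall, not_lt, exists_prop] at hu hy
    obtain ⟨z, hz, hzy⟩ := hy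
    exact (hu z hz).trans_le hzy
  refine ⟨#Y, card_le_univ Y, ?_, ?_⟩ <;> rw [hY]
  · ext u
    simp only [Y, mem_union, mem_filter, mem_univ, true_and]
    refine ⟨fun hu => ?_, fun h => h.elim (fun hu => ?_) (fun huS => hSX huS)⟩
    · by_cases huS : u ∈ S
      · exact Or.inr huS
      refine Or.inl fun y hy => ?_
      have hyS : y ∉ S := fun h => hy (hSX h)
      refine (frontLoad_lt_frontLoad_iff_of_mem_iff (iff_of_false huS hyS)).mp ?_
      exact Fin.lt_def.mpr ((mem_prefixSet.mp hu).trans_le (not_lt.mp (mem_prefixSet.not.mp hy)))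
    · by_contra huX
      exact lt_irrefl _ (hu u huX)
  · intro u hu
    simp only [Y, mem_filter, mem_univ, true_and, not_forall, not_lt, exists_prop] at hu
    obtain ⟨y, hy, hyu⟩ := hu
    exact ⟨y, fun h => hy (hSX h), hyu⟩

end FrontLoad

theorem widthOf_frontLoad_le {E : V → V → Prop} [DecidableRel E]
    {σ : V ≃ Fin (Fintype.card V)} {A B S : Finset V}
    (hmin : ∀ T : Finset V, A ⊆ T → Disjoint B T → #(inArcs E S) ≤ #(inArcs E T))
    (hAS : A ⊆ S) (hBS : Disjoint B S)
    (hSB : ∀ s ∈ S, ∀ b ∈ B, σ s < σ b) (hAS' : ∀ a ∈ A, ∀ y ∉ S, σ a < σ y) :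
    widthOf E (frontLoad σ S) ≤ widthOf E σ := by
  refine Finset.sup_le fun i _ => ?_
  have hwidth (j : ℕ) (hj : j ≤ Fintype.card V) : #(inArcs E (prefixSet σ j)) ≤ widthOf E σ :=
    cutSize_eq_card_inArcs E σ j ▸ cutSize_le_widthOf E σ hj
  rw [cutSize_eq_card_inArcs]
  rcases le_total i #S with hiS | hSi
  · obtain ⟨j, hj, hX, hY⟩ := exists_prefixSet_frontLoad_eq_inter hiS
    have hBY : Disjoint B (prefixSet σ j) := disjoint_left.mpr fun b hb hbY => by
      obtain ⟨x, hx, hbx⟩ := hY b hbY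
      exact (hSB x hx b hb).not_ge hbx
    have hcut := hmin _ (hAS.trans subset_union_right) (disjoint_union_right.mpr ⟨hBY, hBS⟩)
    have huncross := card_inArcs_inter_add_card_inArcs_union_le E (prefixSet σ j) S
    have := hwidth j hj
    rw [hX]; omega
  · obtain ⟨j, hj, hX, hY⟩ := exists_prefixSet_frontLoad_eq_union hSi
    have hAY : A ⊆ prefixSet σ j := fun a ha => by
      by_contra haY
      obtain ⟨y, hy, hya⟩ := hY a haY
      exact (hAS' a ha y hy).not_ge hya
    have hcut := hmin _ (subset_inter hAY hAS) (disjoint_of_subset_right inter_subset_right hBS)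
    have huncross := card_inArcs_inter_add_card_inArcs_union_le E (prefixSet σ j) S
    have := hwidth j hj
    rw [hX]; omega

theorem save_milestone_general (E : V → V → Prop) [DecidableRel E]
    (hsc : ∀ u v : V, u ≠ v → E u v ∨ E v u)
    (π σ : V ≃ Fin (Fintype.card V)) (c : ℕ)
    (hπ : widthOf E π = c) (hσ : widthOf E σ ≤ c)
    (m : ℕ) (hm₁ : 3 * c ≤ m) (hm₂ : m + 3 * c ≤ Fintype.card V)
    (P : Fin (cutSize E π m) → List V)
    (hP : ∀ i, ∃ s ∈ suffixSet π (m + 3 * c), ∃ t ∈ prefixSet π (m - 3 * c),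
      IsPath E s t (P i))
    (hdisj : ∀ i j, i ≠ j → ∀ e : V × V, e ∈ pathArcs (P i) → e ∉ pathArcs (P j)) :
    ∃ σs : V ≃ Fin (Fintype.card V),
      prefixSet σs m = prefixSet π m ∧
      (∀ j : Fin (Fintype.card V),
        ((j : ℕ) + 1 ≤ m - 3 * c ∨ m + 3 * c < (j : ℕ) + 1) → σs.symm j = σ.symm j) ∧
      widthOf E σs ≤ widthOf E σ := by
  set S := prefixSet π m
  have hcardS : #S = m := by rw [card_prefixSet]; omega
  have hπσ {u w : V} (h : (π u : ℕ) + 3 * c < π w) : σ u < σ w :=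
    lt_of_widthOf_le_of_add_lt hsc hπ.le hσ h
  have hmin (T : Finset V) (hA : prefixSet π (m - 3 * c) ⊆ T)
      (hB : Disjoint (suffixSet π (m + 3 * c)) T) : #(inArcs E S) ≤ #(inArcs E T) := by
    simpa only [Fintype.card_fin, cutSize_eq_card_inArcs] using
      card_le_card_inArcs_of_arcDisjoint P hP hdisj hA hB
  have hσS : prefixSet σ (m - 3 * c) ⊆ S := by
    simpa only [Nat.sub_add_cancel hm₁] using prefixSet_subset_prefixSet_add hsc hσ hπ.le (m - 3 * c)
  have hSσ : S ⊆ prefixSet σ (m + 3 * c) := prefixSet_subset_prefixSet_add hsc hπ.le hσ m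
  refine ⟨frontLoad σ S, hcardS ▸ prefixSet_frontLoad_card, fun j hj => ?_, ?_⟩
  · rw [Equiv.symm_apply_eq]
    rcases hj with hj | hj
    · rw [frontLoad_apply_of_prefixSet_subset hσS (by rw [Equiv.apply_symm_apply]; omega),
        Equiv.apply_symm_apply]
    · rw [frontLoad_apply_of_subset_prefixSet hSσ (by rw [Equiv.apply_symm_apply]; omega),
        Equiv.apply_symm_apply]
  · refine widthOf_frontLoad_le hmin (prefixSet_mono π (Nat.sub_le m _)) ?_ ?_ ?_
    · exact disjoint_left.mpr fun b hb hbS => by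
        simp only [mem_suffixSet, S, mem_prefixSet] at hb hbS; omega
    · intro s hs b hb
      simp only [mem_suffixSet, S, mem_prefixSet] at hs hb
      exact hπσ (by omega)
    · intro a ha y hy
      simp only [S, mem_prefixSet, not_lt] at ha hy
      exact hπσ (by omega)

/-- (Rearrangement lemma.) Let `π`, `σ` be orderings of a semi-complete
digraph with `ctw(D,σ) ≤ ctw(D,π) = c`, and let `m ∈ [3c, n − 3c]` be such that there is a
family of `|E^m_π|` pairwise arc-disjoint paths from the last `n − (m + 3c)` vertices of `π`
to the first `m − 3c` vertices of `π`. Then some ordering `σ*` uses the prefix of `π` of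
length `m`, agrees with `σ` outside positions `(m − 3c, m + 3c]`, and has width at most
that of `σ`. -/
theorem save_milestone (E : V → V → Prop) [DecidableRel E]
    (hirr : ∀ w : V, ¬ E w w)
    (hsc : ∀ u v : V, u ≠ v → E u v ∨ E v u)
    (π σ : V ≃ Fin (Fintype.card V)) (c : ℕ)
    (hπ : widthOf E π = c) (hσ : widthOf E σ ≤ c)
    (m : ℕ) (hm₁ : 3 * c ≤ m) (hm₂ : m + 3 * c ≤ Fintype.card V)
    (P : Fin (cutSize E π m) → List V)
    (hP : ∀ i, ∃ s ∈ suffixSet π (m + 3 * c), ∃ t ∈ prefixSet π (m - 3 * c),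
      IsPath E s t (P i))
    (hdisj : ∀ i j, i ≠ j → ∀ e : V × V, e ∈ pathArcs (P i) → e ∉ pathArcs (P j)) :
    ∃ σs : V ≃ Fin (Fintype.card V),
      prefixSet σs m = prefixSet π m ∧
      (∀ j : Fin (Fintype.card V),
        ((j : ℕ) + 1 ≤ m - 3 * c ∨ m + 3 * c < (j : ℕ) + 1) → σs.symm j = σ.symm j) ∧
      widthOf E σs ≤ widthOf E σ :=
  save_milestone_general E hsc π σ c hπ hσ m hm₁ hm₂ P hP hdisj
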